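/- Let κ > 0 and let p, q ∈ ℝ with 1 + 2κ(p − q) ≥ 0. Then β₁(p,q;κ) − β_lin(p,κ) = (1/κ)(κ/4 − √(1 + 2κ(p − q)))². In particular β₁(p,q;κ) ≥ β_lin(p,κ), with equality if and only if q − p = (16 − κ²)/(32κ). -/
import Mathlib


/-- Comparison of the generalized spectrum `β₁(p,q;κ)` with the linear spectrum
`β_lin(p,κ)`: their difference is `(1/κ)(κ/4 − √(1+2κ(p−q)))²`, hence nonnegative,
and vanishes exactly on the phase-transition line `D₁ : q − p = (16 − κ²)/(32κ)`. -/
theorem beta1_minus_betaLin (κ p q : ℝ) (hκ : 0 < κ) (h : 0 ≤ 1 + 2 * κ * (p - q)) :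
    ((3 * p - 2 * q - 1/2 - (1/2) * Real.sqrt (1 + 2 * κ * (p - q)))
        - (p - (4 + κ) ^ 2 / (16 * κ))
      = (1 / κ) * (κ / 4 - Real.sqrt (1 + 2 * κ * (p - q))) ^ 2)
    ∧ (p - (4 + κ) ^ 2 / (16 * κ)
        ≤ 3 * p - 2 * q - 1/2 - (1/2) * Real.sqrt (1 + 2 * κ * (p - q)))
    ∧ ((3 * p - 2 * q - 1/2 - (1/2) * Real.sqrt (1 + 2 * κ * (p - q))
          = p - (4 + κ) ^ 2 / (16 * κ))
        ↔ q - p = (16 - κ ^ 2) / (32 * κ)) := by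
  set s := Real.sqrt (1 + 2 * κ * (p - q)) with hs_def
  have hs0 : 0 ≤ s := Real.sqrt_nonneg _
  have hs : s ^ 2 = 1 + 2 * κ * (p - q) := Real.sq_sqrt h
  have hκ' : κ ≠ 0 := ne_of_gt hκ
  have key : (3 * p - 2 * q - 1/2 - (1/2) * s) - (p - (4 + κ) ^ 2 / (16 * κ))
      = (1 / κ) * (κ / 4 - s) ^ 2 := by
    field_simp
    nlinarith [hs]
  refine ⟨key, ?_, ?_⟩
  · have : 0 ≤ (1 / κ) * (κ / 4 - s) ^ 2 := by positivity
    linarith [key]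
  · constructor
    · intro he
      have h0 : (1 / κ) * (κ / 4 - s) ^ 2 = 0 := by linarith [key]
      have h1 : (κ / 4 - s) ^ 2 = 0 := by
        rcases mul_eq_zero.1 h0 with h2 | h2
        · exact absurd h2 (by positivity)
        · exact h2
      have h2 : s = κ / 4 := by nlinarith
      have : s ^ 2 = κ ^ 2 / 16 := by rw [h2]; ring
      rw [hs] at this
      field_simp
      nlinarith [this]
    · intro he
      have h2 : s ^ 2 = κ ^ 2 / 16 := by
        rw [hs]
        have : q - p = (16 - κ ^ 2) / (32 * κ) := he
        field_simp at this ⊢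
        nlinarith [this]
      have h3 : s = κ / 4 := by
        nlinarith [hs0, hκ.le, sq_nonneg (s - κ / 4), sq_nonneg (s + κ / 4)]
      have := key
      rw [h3] at this
      simp at this
      linarith [this]
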